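/- Every level_U is potent_U and transitive_U, and satisfies U ⊆ s and s ∉ U; and every member of a history_U is a level_U; and s is a level_U iff s = pot_U({r ∈ s : r is a level_U}); and the levels_U are well-ordered by ∈ (in particular any two levels_U are ∈-comparable). -/

import Mathlib

/-!
Every member `x` of a history `h` is `pot_U (x ∩ h)`, and a Russell-style separation makes `∈`
well-founded on `h` for arbitrary predicates. A minimal counterexample shows that for
`x, y ∈ h` with `y ∈ x` every member of `y ∩ h` lies in `x`; so `x ∩ h` is again a history and
the members of histories are levels. Levels inherit well-foundedness from their histories, and two
`∈`-minimal incomparable levels would, by potency and transitivity, have the same members, which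
extensionality forbids.
-/

/-- `x` is a subset of `r` (with respect to the membership relation `mem`). -/
def lvSub {M : Type*} (mem : M → M → Prop) (x r : M) : Prop :=
  ∀ y, mem y x → mem y r

/-- `x ∈U-pot a`: either x is bland and x ⊆ c ∈ a for some c, or x ∈ U. -/
def lvMemUPot {M : Type*} (Bland : M → Prop) (mem : M → M → Prop) (U x a : M) : Prop :=
  (Bland x ∧ ∃ c, lvSub mem x c ∧ mem c a) ∨ mem x U

/-- `p` is pot_U(a): a bland set whose members are exactly {x : x ∈U-pot a}. -/
def lvIsPotU {M : Type*} (Bland : M → Prop) (mem : M → M → Prop) (U a p : M) : Prop :=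
  Bland p ∧ ∀ x, mem x p ↔ lvMemUPot Bland mem U x a

/-- `a` is potent_U: every bland x with x ⊆ c ∈ a for some c ∉ U is a member of a. -/
def lvPotentU {M : Type*} (Bland : M → Prop) (mem : M → M → Prop) (U a : M) : Prop :=
  ∀ x, Bland x → (∃ c, ¬ mem c U ∧ lvSub mem x c ∧ mem c a) → mem x a

/-- `a` is transitive_U: every member of a outside U is a subset of a. -/
def lvTransitiveU {M : Type*} (mem : M → M → Prop) (U a : M) : Prop :=
  ∀ x, mem x a → ¬ mem x U → lvSub mem x a

/-- `i` is the (bland) intersection of `a` and `h`. -/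
def lvIsInter {M : Type*} (Bland : M → Prop) (mem : M → M → Prop) (a h i : M) : Prop :=
  Bland i ∧ ∀ x, mem x i ↔ (mem x a ∧ mem x h)

/-- `h` is a history_U: bland, and every x ∈ h equals pot_U(x ∩ h). -/
def lvHistoryU {M : Type*} (Bland : M → Prop) (mem : M → M → Prop) (U h : M) : Prop :=
  Bland h ∧ ∀ x, mem x h → ∃ i, lvIsInter Bland mem x h i ∧ lvIsPotU Bland mem U i x

/-- `s` is a level_U: s = pot_U(h) for some history_U h. -/
def lvLevelU {M : Type*} (Bland : M → Prop) (mem : M → M → Prop) (U s : M) : Prop :=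
  ∃ h, lvHistoryU Bland mem U h ∧ lvIsPotU Bland mem U h s

/-- Axiom (Sep) of CoreLev. -/
def lvSeparation {M : Type*} (Bland : M → Prop) (mem : M → M → Prop) : Prop :=
  ∀ (φ : M → Prop) a, Bland a → ∃ b, Bland b ∧ ∀ x, mem x b ↔ (mem x a ∧ φ x)

section Levels

variable {M : Type*} {Bland : M → Prop} {mem : M → M → Prop} {U : M}

theorem lvIsPotU.mem_of_mem_U {a p x : M} (hp : lvIsPotU Bland mem U a p) (hx : mem x U) :
    mem x p :=
  (hp.2 x).2 (Or.inr hx)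

theorem lvIsPotU.mem_of_subset {a p x c : M} (hp : lvIsPotU Bland mem U a p) (hx : Bland x)
    (hxc : lvSub mem x c) (hc : mem c a) : mem x p :=
  (hp.2 x).2 (Or.inl ⟨hx, c, hxc, hc⟩)

theorem lvIsPotU.exists_of_mem {a p x : M} (hp : lvIsPotU Bland mem U a p) (hx : mem x p)
    (hxU : ¬ mem x U) : Bland x ∧ ∃ c, lvSub mem x c ∧ mem c a :=
  ((hp.2 x).1 hx).resolve_right hxU

theorem lvIsPotU.not_mem_U (hU : ∀ x, mem x U → ¬ mem x x) {a p : M}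
    (hp : lvIsPotU Bland mem U a p) : ¬ mem p U :=
  fun hpU => hU p hpU (hp.mem_of_mem_U hpU)

theorem lvIsPotU.potentU {a p : M} (hp : lvIsPotU Bland mem U a p) :
    lvPotentU Bland mem U p := by
  rintro x hx ⟨c, hcU, hxc, hcp⟩
  obtain ⟨-, d, hcd, hda⟩ := hp.exists_of_mem hcp hcU
  exact hp.mem_of_subset hx (fun y hy => hcd y (hxc y hy)) hda

theorem lvHistoryU.bland_of_mem {h x : M} (hh : lvHistoryU Bland mem U h) (hx : mem x h) :
    Bland x := by
  obtain ⟨_, _, hpot⟩ := hh.2 x hx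
  exact hpot.1

theorem lvHistoryU.mem_potU_of_mem_of_mem {h s c x : M} (hh : lvHistoryU Bland mem U h)
    (hs : lvIsPotU Bland mem U h s) (hc : mem c h) (hx : mem x c) : mem x s := by
  obtain ⟨i, ⟨-, hi⟩, hpot⟩ := hh.2 c hc
  by_cases hxU : mem x U
  · exact hs.mem_of_mem_U hxU
  · obtain ⟨hxb, d, hxd, hdi⟩ := hpot.exists_of_mem hx hxU
    exact hs.mem_of_subset hxb hxd ((hi d).1 hdi).2

/-- If no `P`-member of `h` were `∈`-minimal, the Russell set
`{z ∈ x₀ : z ∉ z ∧ z lies in every P-member of h}` would lie in every `P`-member of `h`: each of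
them is the pot of its trace on `h`, and contains a smaller `P`-member of `h`. Applied to `x₀`,
it would then be a member of itself exactly when it is not. -/
theorem lvHistoryU.exists_minimal (hSep : lvSeparation Bland mem) {h x₀ : M}
    (hh : lvHistoryU Bland mem U h) (P : M → Prop) (hx₀ : mem x₀ h) (hP : P x₀) :
    ∃ m, mem m h ∧ P m ∧ ∀ y, mem y h → P y → ¬ mem y m := by
  by_contra! hnone
  obtain ⟨r, hr, hrmem⟩ := hSep (fun z => (∀ x, mem x h → P x → mem z x) ∧ ¬ mem z z) x₀
    (hh.bland_of_mem hx₀)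
  have hr_mem : ∀ x, mem x h → P x → mem r x := by
    intro x hx hPx
    obtain ⟨y, hy, hPy, hyx⟩ := hnone x hx hPx
    obtain ⟨i, ⟨-, hi⟩, hpot⟩ := hh.2 x hx
    exact hpot.mem_of_subset hr (fun z hz => ((hrmem z).1 hz).2.1 y hy hPy) ((hi y).2 ⟨hyx, hy⟩)
  have hrr := hrmem r
  tauto

theorem lvHistoryU.subset_of_inter_subset {h x y : M} (hh : lvHistoryU Bland mem U h)
    (hx : mem x h) (hy : mem y h) (hxy : ∀ d, mem d x → mem d h → mem d y) : lvSub mem x y := by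
  obtain ⟨i, ⟨-, hi⟩, hxpot⟩ := hh.2 x hx
  obtain ⟨j, ⟨-, hj⟩, hypot⟩ := hh.2 y hy
  intro v hv
  by_cases hvU : mem v U
  · exact hypot.mem_of_mem_U hvU
  · obtain ⟨hvb, d, hvd, hdi⟩ := hxpot.exists_of_mem hv hvU
    obtain ⟨hdx, hdh⟩ := (hi d).1 hdi
    exact hypot.mem_of_subset hvb hvd ((hj d).2 ⟨hxy d hdx hdh, hdh⟩)

theorem lvHistoryU.mem_of_mem_of_mem (hSep : lvSeparation Bland mem) {h x y z : M}
    (hh : lvHistoryU Bland mem U h) (hx : mem x h) (hy : mem y h) (hyx : mem y x)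
    (hz : mem z h) (hzy : mem z y) : mem z x := by
  by_contra hzx
  obtain ⟨m, hm, ⟨y', z', hy', hy'm, hz', hz'y', hz'm⟩, hmin⟩ :=
    hh.exists_minimal hSep
      (fun x => ∃ y z, mem y h ∧ mem y x ∧ mem z h ∧ mem z y ∧ ¬ mem z x) hx
      ⟨y, z, hy, hyx, hz, hzy, hzx⟩
  have hz'y'_sub : lvSub mem z' y' := hh.subset_of_inter_subset hz' hy' fun d hdz' hd =>
    by_contra fun hdy' => hmin y' hy' ⟨z', d, hz', hz'y', hd, hdz', hdy'⟩ hy'm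
  obtain ⟨i, ⟨-, hi⟩, hpot⟩ := hh.2 m hm
  exact hz'm (hpot.mem_of_subset (hh.bland_of_mem hz') hz'y'_sub ((hi y').2 ⟨hy'm, hy'⟩))

theorem lvHistoryU.levelU_of_mem (hSep : lvSeparation Bland mem) {h x : M}
    (hh : lvHistoryU Bland mem U h) (hx : mem x h) : lvLevelU Bland mem U x := by
  obtain ⟨i, ⟨hib, hi⟩, hpot⟩ := hh.2 x hx
  refine ⟨i, ⟨hib, fun y hyi => ?_⟩, hpot⟩
  obtain ⟨hyx, hy⟩ := (hi y).1 hyi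
  obtain ⟨j, ⟨hjb, hj⟩, hjpot⟩ := hh.2 y hy
  refine ⟨j, ⟨hjb, fun z => (hj z).trans ⟨fun ⟨hzy, hz⟩ => ?_, fun ⟨hzy, hzi⟩ => ?_⟩⟩, hjpot⟩
  · exact ⟨hzy, (hi z).2 ⟨hh.mem_of_mem_of_mem hSep hx hy hyx hz hzy, hz⟩⟩
  · exact ⟨hzy, ((hi z).1 hzi).2⟩

theorem lvLevelU.bland {s : M} (hs : lvLevelU Bland mem U s) : Bland s := by
  obtain ⟨_, _, hp⟩ := hs
  exact hp.1

theorem lvLevelU.not_mem_U (hU : ∀ x, mem x U → ¬ mem x x) {s : M}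
    (hs : lvLevelU Bland mem U s) : ¬ mem s U := by
  obtain ⟨_, _, hp⟩ := hs
  exact hp.not_mem_U hU

theorem lvLevelU.potentU {s : M} (hs : lvLevelU Bland mem U s) : lvPotentU Bland mem U s := by
  obtain ⟨_, _, hp⟩ := hs
  exact hp.potentU

theorem lvLevelU.mem_of_mem_U {s x : M} (hs : lvLevelU Bland mem U s) (hx : mem x U) :
    mem x s := by
  obtain ⟨_, _, hp⟩ := hs
  exact hp.mem_of_mem_U hx

theorem lvLevelU.transitiveU {s : M} (hs : lvLevelU Bland mem U s) : lvTransitiveU mem U s := by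
  obtain ⟨h, hh, hp⟩ := hs
  intro x hxs hxU y hyx
  obtain ⟨-, c, hxc, hc⟩ := hp.exists_of_mem hxs hxU
  exact hh.mem_potU_of_mem_of_mem hp hc (hxc y hyx)

theorem lvLevelU.exists_levelU_of_mem (hSep : lvSeparation Bland mem) {s y : M}
    (hs : lvLevelU Bland mem U s) (hy : mem y s) (hyU : ¬ mem y U) :
    Bland y ∧ ∃ d, lvLevelU Bland mem U d ∧ mem d s ∧ lvSub mem y d := by
  obtain ⟨h, hh, hp⟩ := hs
  obtain ⟨hyb, d, hyd, hd⟩ := hp.exists_of_mem hy hyU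
  exact ⟨hyb, d, hh.levelU_of_mem hSep hd,
    hp.mem_of_subset (hh.bland_of_mem hd) (fun _ => id) hd, hyd⟩

/-- Take `m` `∈`-minimal among the members of the history `h` of `s` that include some
`φ`-level `r`; then `r` is `∈`-minimal, since a smaller `φ`-level would be included in some
member of `m ∩ h`. -/
theorem lvLevelU.exists_minimal (hSep : lvSeparation Bland mem) (hU : ∀ x, mem x U → ¬ mem x x)
    (φ : M → Prop) {s : M} (hs : lvLevelU Bland mem U s) (hφ : φ s) :
    ∃ t, lvLevelU Bland mem U t ∧ φ t ∧ ∀ r, lvLevelU Bland mem U r → mem r t → ¬ φ r := by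
  by_cases hbelow : ∃ r, lvLevelU Bland mem U r ∧ mem r s ∧ φ r
  swap
  · push Not at hbelow
    exact ⟨s, hs, hφ, hbelow⟩
  obtain ⟨r, hr, hrs, hφr⟩ := hbelow
  obtain ⟨h, hh, hp⟩ := hs
  obtain ⟨-, c, hrc, hc⟩ := hp.exists_of_mem hrs (hr.not_mem_U hU)
  obtain ⟨m, hm, ⟨r', hr', hφr', hr'm⟩, hmin⟩ :=
    hh.exists_minimal hSep (fun x => ∃ r, lvLevelU Bland mem U r ∧ φ r ∧ lvSub mem r x) hc
      ⟨r, hr, hφr, hrc⟩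
  refine ⟨r', hr', hφr', fun t ht htr' hφt => ?_⟩
  obtain ⟨i, ⟨-, hi⟩, hpot⟩ := hh.2 m hm
  obtain ⟨-, c', htc', hc'i⟩ := hpot.exists_of_mem (hr'm t htr') (ht.not_mem_U hU)
  obtain ⟨hc'm, hc'⟩ := (hi c').1 hc'i
  exact hmin c' hc' ⟨t, ht, hφt, htc'⟩ hc'm

theorem lvLevelU.subset_of_forall_mem (hSep : lvSeparation Bland mem)
    (hU : ∀ x, mem x U → ¬ mem x x) {r s : M} (hr : lvLevelU Bland mem U r)
    (hs : lvLevelU Bland mem U s) (hsr : ¬ mem s r)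
    (hcomp : ∀ d, lvLevelU Bland mem U d → mem d r → mem d s ∨ d = s ∨ mem s d) :
    lvSub mem r s := by
  intro y hy
  by_cases hyU : mem y U
  · exact hs.mem_of_mem_U hyU
  obtain ⟨hyb, d, hd, hdr, hyd⟩ := hr.exists_levelU_of_mem hSep hy hyU
  rcases hcomp d hd hdr with hds | rfl | hsd
  · exact hs.potentU y hyb ⟨d, hd.not_mem_U hU, hyd, hds⟩
  · exact absurd hdr hsr
  · exact absurd (hr.transitiveU d hdr (hd.not_mem_U hU) s hsd) hsr

/-- Take a `∈`-minimal level `r₀` incomparable with some level, and then a `∈`-minimal level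
`s₀` incomparable with `r₀`: everything below either one is comparable with the other, which
forces `r₀` and `s₀` to have the same members. -/
theorem lvLevelU.trichotomous
    (hExt : ∀ a b, Bland a → Bland b → (∀ x, mem x a ↔ mem x b) → a = b)
    (hSep : lvSeparation Bland mem) (hU : ∀ x, mem x U → ¬ mem x x) {r s : M}
    (hr : lvLevelU Bland mem U r) (hs : lvLevelU Bland mem U s) :
    mem r s ∨ r = s ∨ mem s r := by
  by_contra hrs
  obtain ⟨r₀, hr₀, ⟨s₁, hs₁, hr₀s₁⟩, hr₀min⟩ := hr.exists_minimal hSep hU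
    (fun t => ∃ w, lvLevelU Bland mem U w ∧ ¬ (mem t w ∨ t = w ∨ mem w t)) ⟨s, hs, hrs⟩
  obtain ⟨s₀, hs₀, hs₀r₀, hs₀min⟩ := hs₁.exists_minimal hSep hU
    (fun w => ¬ (mem w r₀ ∨ w = r₀ ∨ mem r₀ w)) (by rw [eq_comm]; tauto)
  push Not at hs₀r₀
  obtain ⟨hs₀r₀, hne, hr₀s₀⟩ := hs₀r₀
  have hsub : lvSub mem r₀ s₀ := hr₀.subset_of_forall_mem hSep hU hs₀ hs₀r₀ fun d hd hdr₀ =>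
    not_not.1 fun hds₀ => hr₀min d hd hdr₀ ⟨s₀, hs₀, hds₀⟩
  have hsup : lvSub mem s₀ r₀ := hs₀.subset_of_forall_mem hSep hU hr₀ hr₀s₀ fun c hc hcs₀ =>
    not_not.1 (hs₀min c hc hcs₀)
  exact hne (hExt s₀ r₀ hs₀.bland hr₀.bland fun x => ⟨hsup x, hsub x⟩)

theorem lvLevelU.isPotU_levelsIn (hSep : lvSeparation Bland mem) (hU : ∀ x, mem x U → ¬ mem x x)
    {s k : M} (hs : lvLevelU Bland mem U s)
    (hk : ∀ x, mem x k ↔ (mem x s ∧ lvLevelU Bland mem U x)) : lvIsPotU Bland mem U k s := by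
  refine ⟨hs.bland, fun z => ⟨fun hz => ?_, ?_⟩⟩
  · by_cases hzU : mem z U
    · exact Or.inr hzU
    obtain ⟨hzb, d, hd, hds, hzd⟩ := hs.exists_levelU_of_mem hSep hz hzU
    exact Or.inl ⟨hzb, d, hzd, (hk d).2 ⟨hds, hd⟩⟩
  · rintro (⟨hzb, c, hzc, hck⟩ | hzU)
    · obtain ⟨hcs, hc⟩ := (hk c).1 hck
      exact hs.potentU z hzb ⟨c, hc.not_mem_U hU, hzc, hcs⟩
    · exact hs.mem_of_mem_U hzU

theorem lvHistoryU.of_levelU (hSep : lvSeparation Bland mem) (hU : ∀ x, mem x U → ¬ mem x x)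
    {k : M} (hk : Bland k) (hlev : ∀ x, mem x k → lvLevelU Bland mem U x)
    (hclosed : ∀ x z, mem x k → mem z x → lvLevelU Bland mem U z → mem z k) :
    lvHistoryU Bland mem U k := by
  refine ⟨hk, fun x hx => ?_⟩
  obtain ⟨i, hib, hi⟩ := hSep (fun z => mem z k) x (hlev x hx).bland
  refine ⟨i, ⟨hib, hi⟩, (hlev x hx).isPotU_levelsIn hSep hU fun z => (hi z).trans ?_⟩
  exact ⟨fun ⟨hzx, hz⟩ => ⟨hzx, hlev z hz⟩, fun ⟨hzx, hz⟩ => ⟨hzx, hclosed x z hx hzx hz⟩⟩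

theorem lvLevelU_iff_isPotU_levelsIn (hSep : lvSeparation Bland mem)
    (hU : ∀ x, mem x U → ¬ mem x x) (s : M) :
    lvLevelU Bland mem U s ↔
      ∃ k, Bland k ∧ (∀ x, mem x k ↔ (mem x s ∧ lvLevelU Bland mem U x)) ∧
        lvIsPotU Bland mem U k s := by
  constructor
  · intro hs
    obtain ⟨k, hkb, hk⟩ := hSep (lvLevelU Bland mem U) s hs.bland
    exact ⟨k, hkb, hk, hs.isPotU_levelsIn hSep hU hk⟩
  · rintro ⟨k, hkb, hk, hpot⟩
    refine ⟨k, lvHistoryU.of_levelU hSep hU hkb (fun x hx => ((hk x).1 hx).2) ?_, hpot⟩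
    intro x z hxk hzx hz
    have hx := ((hk x).1 hxk).2
    exact (hk z).2 ⟨hpot.mem_of_subset hz.bland
      (hx.transitiveU z hzx (hz.not_mem_U hU)) hxk, hz⟩

end Levels

/-- Key facts about levels_U: every level_U is potent_U, transitive_U, includes U and
is not in U; every member of a history_U is a level_U; s is a level_U iff
s = pot_U({r ∈ s : r is a level_U}); and the levels_U are well-ordered by ∈. -/
theorem levelU_facts {M : Type*} (Bland : M → Prop) (mem : M → M → Prop) (U : M)
    (hExt : ∀ a b, Bland a → Bland b → (∀ x, mem x a ↔ mem x b) → a = b)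
    (hSep : ∀ (φ : M → Prop) a, Bland a → ∃ b, Bland b ∧ ∀ x, mem x b ↔ (mem x a ∧ φ x))
    (hU : ∀ x, mem x U → ¬ mem x x) :
    (∀ s, lvLevelU Bland mem U s →
      lvPotentU Bland mem U s ∧ lvTransitiveU mem U s ∧
        (∀ x, mem x U → mem x s) ∧ ¬ mem s U) ∧
    (∀ h, lvHistoryU Bland mem U h → ∀ x, mem x h → lvLevelU Bland mem U x) ∧
    (∀ s, lvLevelU Bland mem U s ↔
      ∃ k, Bland k ∧ (∀ x, mem x k ↔ (mem x s ∧ lvLevelU Bland mem U x)) ∧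
        lvIsPotU Bland mem U k s) ∧
    (∀ r s, lvLevelU Bland mem U r → lvLevelU Bland mem U s →
      (mem r s ∨ r = s ∨ mem s r)) ∧
    (∀ φ : M → Prop, (∃ s, lvLevelU Bland mem U s ∧ φ s) →
      ∃ s, lvLevelU Bland mem U s ∧ φ s ∧
        ∀ r, lvLevelU Bland mem U r → mem r s → ¬ φ r) := by
  exact ⟨fun s hs => ⟨hs.potentU, hs.transitiveU, fun _ => hs.mem_of_mem_U, hs.not_mem_U hU⟩,
    fun h hh _ => hh.levelU_of_mem hSep, lvLevelU_iff_isPotU_levelsIn hSep hU,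
    fun r s hr hs => hr.trichotomous hExt hSep hU hs,
    fun φ ⟨s, hs, hφ⟩ => hs.exists_minimal hSep hU φ hφ⟩
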